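/- Let I ⊆ J be an interval unbounded above, fix t₀ ∈ J, and suppose the evolution family Φ has uniform bounded h-growth on I. If there exist an n×n real matrix P with P² = P, P ≠ 0 and P ≠ I, and constants K₁, K₂ > 0, α > 0 such that for every ξ ∈ ℝⁿ: |Φ(t,t₀)Pξ| ≤ K₁·(h(t)/h(s))^{-α}·|Φ(s,t₀)Pξ| for all t ≥ s with t, s ∈ I, and |Φ(t,t₀)(I − P)ξ| ≤ K₂·(h(s)/h(t))^{-α}·|Φ(s,t₀)(I − P)ξ| for all t ≤ s with t, s ∈ I, then there exists M > 0 such that ‖Φ(t,t₀)·P·Φ(t₀,t)‖ ≤ M for all t ∈ I. -/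

import Mathlib

open Set

noncomputable section

/-- The operation `t ∗ s := h⁻¹ (h t · h s)` on `J`. -/
def star (h hinv : ℝ → ℝ) (t s : ℝ) : ℝ := hinv (h t * h s)

/-- The unit element `e∗ := h⁻¹ 1`. -/
def estar (hinv : ℝ → ℝ) : ℝ := hinv 1

/-- The inverse `t^{∗-1} := h⁻¹ (1 / h t)`. -/
def sinv (h hinv : ℝ → ℝ) (t : ℝ) : ℝ := hinv (1 / h t)

/-- The absolute value `|t|∗ := t` if `e∗ ≤ t` and `t^{∗-1}` otherwise. -/
def absStar (h hinv : ℝ → ℝ) (t : ℝ) : ℝ := if estar hinv ≤ t then t else sinv h hinv t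

/-- `h : J → (0,∞)` is a growth rate: a strictly increasing homeomorphism of
`J = (a₀,∞)` (or `J = ℝ`) onto `(0,∞)`, with (two-sided) inverse `hinv`. -/
structure GrowthRate (J : Set ℝ) (h hinv : ℝ → ℝ) : Prop where
  J_eq : (∃ a₀ : ℝ, J = Set.Ioi a₀) ∨ J = Set.univ
  mono : StrictMonoOn h J
  cont : ContinuousOn h J
  pos : ∀ t ∈ J, 0 < h t
  inv_left : ∀ t ∈ J, hinv (h t) = t
  inv_mem : ∀ y ∈ Set.Ioi (0:ℝ), hinv y ∈ J
  inv_right : ∀ y ∈ Set.Ioi (0:ℝ), h (hinv y) = y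
  inv_cont : ContinuousOn hinv (Set.Ioi 0)

variable {E : Type*} [NormedAddCommGroup E] [NormedSpace ℝ E]

/-- An evolution family on `J`: `Φ t t = I` and `Φ t u ∘ Φ u s = Φ t s`. -/
def IsEvolutionFamily (J : Set ℝ) (Φ : ℝ → ℝ → (E →L[ℝ] E)) : Prop :=
  (∀ t ∈ J, Φ t t = 1) ∧ (∀ t ∈ J, ∀ u ∈ J, ∀ s ∈ J, Φ t u * Φ u s = Φ t s)

/-- `Φ` has a uniform `h`-dichotomy on `I` with projections `P` and constants `K, α`. -/
def HasUHDWith (I : Set ℝ) (h : ℝ → ℝ) (Φ : ℝ → ℝ → (E →L[ℝ] E))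
    (P : ℝ → (E →L[ℝ] E)) (K α : ℝ) : Prop :=
  (∀ t ∈ I, P t * P t = P t) ∧
  (∀ t ∈ I, ∀ s ∈ I, P t * Φ t s = Φ t s * P s) ∧
  (∀ s ∈ I, ∀ t ∈ I, s ≤ t → ‖Φ t s * P s‖ ≤ K * (h t / h s) ^ (-α)) ∧
  (∀ s ∈ I, ∀ t ∈ I, t ≤ s → ‖Φ t s * (1 - P s)‖ ≤ K * (h s / h t) ^ (-α))

/-- `Φ` has a uniform `h`-dichotomy on `I`. -/
def HasUHD (I : Set ℝ) (h : ℝ → ℝ) (Φ : ℝ → ℝ → (E →L[ℝ] E)) : Prop :=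
  ∃ K ≥ (1:ℝ), ∃ α > (0:ℝ), ∃ P : ℝ → (E →L[ℝ] E), HasUHDWith I h Φ P K α

/-- Uniform bounded `h`-growth on `I`: every solution satisfies
`|x t| ≤ C |x s|` for `s ∈ I` and `t ∈ [s, s∗T] ∩ I`. -/
def UnifBoundedHGrowth (J I : Set ℝ) (h hinv : ℝ → ℝ) (Φ : ℝ → ℝ → (E →L[ℝ] E)) : Prop :=
  ∃ T > estar hinv, ∃ C ≥ (1:ℝ), ∀ s₀ ∈ J, ∀ ξ : E, ∀ s ∈ I, ∀ t ∈ I,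
    s ≤ t → t ≤ star h hinv s T → ‖(Φ t s₀) ξ‖ ≤ C * ‖(Φ s s₀) ξ‖

/-- Uniform bounded `h`-decay on `I`: every solution satisfies
`|x t| ≤ C |x s|` for `s ∈ I` and `t ∈ [s∗T^{∗-1}, s] ∩ I`. -/
def UnifBoundedHDecay (J I : Set ℝ) (h hinv : ℝ → ℝ) (Φ : ℝ → ℝ → (E →L[ℝ] E)) : Prop :=
  ∃ T > estar hinv, ∃ C ≥ (1:ℝ), ∀ s₀ ∈ J, ∀ ξ : E, ∀ s ∈ I, ∀ t ∈ I,
    star h hinv s (sinv h hinv T) ≤ t → t ≤ s → ‖(Φ t s₀) ξ‖ ≤ C * ‖(Φ s s₀) ξ‖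

/-- Uniform bounded `h`-growth and `h`-decay on `I`: every solution satisfies
`|x t| ≤ C |x s|` for `s ∈ I` and `t ∈ [s∗T^{∗-1}, s∗T] ∩ I`. -/
def UnifBoundedHGrowthDecay (J I : Set ℝ) (h hinv : ℝ → ℝ) (Φ : ℝ → ℝ → (E →L[ℝ] E)) : Prop :=
  ∃ T > estar hinv, ∃ C ≥ (1:ℝ), ∀ s₀ ∈ J, ∀ ξ : E, ∀ s ∈ I, ∀ t ∈ I,
    star h hinv s (sinv h hinv T) ≤ t → t ≤ star h hinv s T → ‖(Φ t s₀) ξ‖ ≤ C * ‖(Φ s s₀) ξ‖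

/-- `Φ` is uniformly `h`-noncritical on `[e∗,∞)`: there are `T > e∗` and `θ ∈ (0,1)` with
`|x t| ≤ θ · sup {|x u| : u ∈ J, |u ∗ t^{∗-1}|∗ ≤ T}` for all `t ≥ T`, for every solution. -/
def UnifHNoncritical (J : Set ℝ) (h hinv : ℝ → ℝ) (Φ : ℝ → ℝ → (E →L[ℝ] E)) : Prop :=
  ∃ T > estar hinv, ∃ θ : ℝ, 0 < θ ∧ θ < 1 ∧
    ∀ s₀ ∈ J, ∀ ξ : E, ∀ t, T ≤ t →
      ‖(Φ t s₀) ξ‖ ≤ θ * sSup ((fun u => ‖(Φ u s₀) ξ‖) ''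
        {u | u ∈ J ∧ absStar h hinv (star h hinv u (sinv h hinv t)) ≤ T})

/-- `Φ` is `h`-expansive on `I`: there are `L, β > 0` such that every solution satisfies
`|x t| ≤ L (h(t∗a^{∗-1})^{-β} |x a| + h(b∗t^{∗-1})^{-β} |x b|)` for `[a,b] ⊆ I`, `a ≤ t ≤ b`. -/
def HExpansive (J I : Set ℝ) (h hinv : ℝ → ℝ) (Φ : ℝ → ℝ → (E →L[ℝ] E)) : Prop :=
  ∃ L > (0:ℝ), ∃ β > (0:ℝ), ∀ s₀ ∈ J, ∀ ξ : E, ∀ a ∈ I, ∀ b ∈ I, ∀ t, a ≤ t → t ≤ b →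
    ‖(Φ t s₀) ξ‖ ≤ L * ((h (star h hinv t (sinv h hinv a))) ^ (-β) * ‖(Φ a s₀) ξ‖ +
      (h (star h hinv b (sinv h hinv t))) ^ (-β) * ‖(Φ b s₀) ξ‖)

/-! Fix `t ∈ I`, write `ξ = x(t)` for the solution `x = Φ(·,t₀)η` with `η = Φ(t₀,t)ξ`, and
split `x = x_P + x_Q` along `P` and `1 - P`. Take `s ≥ t` with `h s = h(T)^N h t`, where
`T, C` are the bounded-growth constants, and put `δ = h(T)^{-α} < 1`. Estimate (a) gives
`|x_P(s)| ≤ K₁ δ^N |x_P(t)|`, estimate (b) gives `|x_Q(t)| ≤ K₂ δ^N |x_Q(s)|`, and `N` steps of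
bounded growth give `|x(s)| ≤ C^N |ξ|`. Since `|x_Q(s)| ≤ |x(s)| + |x_P(s)|` and
`|x_P(t)| ≤ |ξ| + |x_Q(t)|`, this yields
`|x_P(t)| ≤ (1 + K₂ δ^N C^N) |ξ| + K₁ K₂ δ^{2N} |x_P(t)|`, and choosing `N` with
`K₁ K₂ δ^{2N} ≤ 1/2` bounds `|Φ(t,t₀) P Φ(t₀,t) ξ| = |x_P(t)|` by a multiple of `|ξ|` that does
not depend on `t`. -/

theorem Set.OrdConnected.mem_of_le_of_forall_exists_gt {α : Type*} [LinearOrder α] {I : Set α}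
    (hI : I.OrdConnected) (hunb : ∀ b, ∃ t ∈ I, b < t) {x y : α} (hx : x ∈ I) (hxy : x ≤ y) :
    y ∈ I := by
  obtain ⟨t, htI, hyt⟩ := hunb y
  exact hI.out hx htI ⟨hxy, hyt.le⟩

theorem norm_le_of_opposite_contractions {F : Type*} [SeminormedAddCommGroup F]
    {p q p' q' : F} {a b D : ℝ} (hp : ‖p'‖ ≤ a * ‖p‖) (hq : ‖q‖ ≤ b * ‖q'‖)
    (hD : ‖p' + q'‖ ≤ D * ‖p + q‖) (hab : a * b ≤ 1 / 2) (hb : 0 ≤ b) :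
    ‖p‖ ≤ 2 * (1 + b * D) * ‖p + q‖ := by
  have hq' : ‖q'‖ ≤ D * ‖p + q‖ + a * ‖p‖ :=
    calc ‖q'‖ = ‖(p' + q') - p'‖ := by rw [add_sub_cancel_left]
      _ ≤ ‖p' + q'‖ + ‖p'‖ := norm_sub_le _ _
      _ ≤ D * ‖p + q‖ + a * ‖p‖ := add_le_add hD hp
  have hp' : ‖p‖ ≤ ‖p + q‖ + ‖q‖ :=
    calc ‖p‖ = ‖(p + q) - q‖ := by rw [add_sub_cancel_right]
      _ ≤ ‖p + q‖ + ‖q‖ := norm_sub_le _ _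
  have hab' : a * b * ‖p‖ ≤ 1 / 2 * ‖p‖ := mul_le_mul_of_nonneg_right hab (norm_nonneg p)
  nlinarith [mul_le_mul_of_nonneg_left hq' hb]

theorem exists_mul_pow_mul_mul_pow_le {δ K₁ K₂ ε : ℝ} (hδ0 : 0 ≤ δ) (hδ1 : δ < 1)
    (hK₁ : 0 < K₁) (hK₂ : 0 < K₂) (hε : 0 < ε) : ∃ N : ℕ, K₁ * δ ^ N * (K₂ * δ ^ N) ≤ ε := by
  obtain ⟨N, hN⟩ := exists_pow_lt_of_lt_one (by positivity : 0 < ε / (K₁ * K₂))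
    (pow_lt_one₀ hδ0 hδ1 two_ne_zero)
  refine ⟨N, ?_⟩
  rw [← pow_mul, mul_comm 2 N, pow_mul] at hN
  calc K₁ * δ ^ N * (K₂ * δ ^ N) = K₁ * K₂ * (δ ^ N) ^ 2 := by ring
    _ ≤ K₁ * K₂ * (ε / (K₁ * K₂)) := by gcongr
    _ = ε := by field_simp

theorem ContinuousLinearMap.mul_apply_add_mul_one_sub_apply (A P : E →L[ℝ] E) (x : E) :
    (A * P) x + (A * (1 - P)) x = A x := by
  rw [← add_apply, ← mul_add, add_sub_cancel, mul_one]

theorem IsEvolutionFamily.apply_apply_swap {J : Set ℝ} {Φ : ℝ → ℝ → (E →L[ℝ] E)}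
    (hΦ : IsEvolutionFamily J Φ) {s t : ℝ} (hs : s ∈ J) (ht : t ∈ J) (ξ : E) :
    Φ t s (Φ s t ξ) = ξ := by
  change (Φ t s * Φ s t) ξ = ξ
  rw [hΦ.2 t ht s hs t ht, hΦ.1 t ht]
  rfl

namespace GrowthRate

variable {J : Set ℝ} {h hinv : ℝ → ℝ}

theorem mem_of_le (hgr : GrowthRate J h hinv) {x y : ℝ} (hx : x ∈ J) (hxy : x ≤ y) : y ∈ J := by
  rcases hgr.J_eq with ⟨a₀, rfl⟩ | rfl
  · exact lt_of_lt_of_le hx hxy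
  · trivial

theorem estar_mem (hgr : GrowthRate J h hinv) : estar hinv ∈ J :=
  hgr.inv_mem 1 (mem_Ioi.2 one_pos)

theorem one_lt_of_estar_lt (hgr : GrowthRate J h hinv) {T : ℝ} (hT : estar hinv < T) :
    1 < h T := by
  have := hgr.mono hgr.estar_mem (hgr.mem_of_le hgr.estar_mem hT.le) hT
  rwa [estar, hgr.inv_right 1 (mem_Ioi.2 one_pos)] at this

theorem apply_hinv_mul (hgr : GrowthRate J h hinv) {r t : ℝ} (hr : 0 < r) (ht : t ∈ J) :
    h (hinv (r * h t)) = r * h t :=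
  hgr.inv_right _ (mul_pos hr (hgr.pos t ht))

theorem le_hinv_mul (hgr : GrowthRate J h hinv) {r t : ℝ} (hr : 1 ≤ r) (ht : t ∈ J) :
    t ≤ hinv (r * h t) := by
  have hr0 : 0 < r := one_pos.trans_le hr
  rw [← hgr.mono.le_iff_le ht (hgr.inv_mem _ (mul_pos hr0 (hgr.pos t ht))),
    hgr.apply_hinv_mul hr0 ht]
  exact le_mul_of_one_le_left (hgr.pos t ht).le hr

theorem star_mem (hgr : GrowthRate J h hinv) {s t : ℝ} (hs : s ∈ J) (ht : t ∈ J) :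
    star h hinv s t ∈ J :=
  hgr.inv_mem _ (mul_pos (hgr.pos s hs) (hgr.pos t ht))

theorem apply_star (hgr : GrowthRate J h hinv) {s t : ℝ} (hs : s ∈ J) (ht : t ∈ J) :
    h (star h hinv s t) = h s * h t :=
  hgr.inv_right _ (mul_pos (hgr.pos s hs) (hgr.pos t ht))

theorem le_pow_mul_of_le_star (hgr : GrowthRate J h hinv) {I : Set ℝ} (hIJ : I ⊆ J)
    (hI : I.OrdConnected) {T C : ℝ} (hT : estar hinv < T) (hC : 1 ≤ C) {f : ℝ → ℝ}
    (hf0 : ∀ t ∈ I, 0 ≤ f t)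
    (hf : ∀ s ∈ I, ∀ t ∈ I, s ≤ t → t ≤ star h hinv s T → f t ≤ C * f s)
    (N : ℕ) {s t : ℝ} (hs : s ∈ I) (ht : t ∈ I) (hst : s ≤ t) (hts : h t ≤ h T ^ N * h s) :
    f t ≤ C ^ N * f s := by
  have hTJ : T ∈ J := hgr.mem_of_le hgr.estar_mem hT.le
  induction N generalizing s with
  | zero =>
    have hts' : t ≤ s := (hgr.mono.le_iff_le (hIJ ht) (hIJ hs)).1 (by simpa using hts)
    rw [le_antisymm hts' hst, pow_zero, one_mul]
  | succ N ih =>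
    set u := star h hinv s T
    have hu : h u = h s * h T := hgr.apply_star (hIJ hs) hTJ
    have hsu : s ≤ u := by
      rw [← hgr.mono.le_iff_le (hIJ hs) (hgr.star_mem (hIJ hs) hTJ), hu]
      exact le_mul_of_one_le_right (hgr.pos s (hIJ hs)).le (hgr.one_lt_of_estar_lt hT).le
    rcases le_or_gt t u with htu | hut
    · calc f t ≤ C * f s := hf s hs t ht hst htu
        _ ≤ C ^ (N + 1) * f s :=
          mul_le_mul_of_nonneg_right (le_self_pow₀ hC N.succ_ne_zero) (hf0 s hs)
    · have huI : u ∈ I := hI.out hs ht ⟨hsu, hut.le⟩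
      have hts' : h t ≤ h T ^ N * h u := by rw [hu]; convert hts using 1; ring
      calc f t ≤ C ^ N * f u := ih huI hut.le hts'
        _ ≤ C ^ N * (C * f s) :=
          mul_le_mul_of_nonneg_left (hf s hs u huI hsu le_rfl) (by positivity)
        _ = C ^ (N + 1) * f s := by ring

end GrowthRate

theorem statement8_general {J I : Set ℝ} {h hinv : ℝ → ℝ} (hgr : GrowthRate J h hinv)
    (hIJ : I ⊆ J) (hIc : I.OrdConnected) (hIunb : ∀ b : ℝ, ∃ t ∈ I, b < t)
    {E : Type*} [NormedAddCommGroup E] [NormedSpace ℝ E]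
    (Φ : ℝ → ℝ → (E →L[ℝ] E)) (hΦ : IsEvolutionFamily J Φ)
    (t₀ : ℝ) (ht₀ : t₀ ∈ J)
    (hbg : UnifBoundedHGrowth J I h hinv Φ)
    (P : E →L[ℝ] E)
    (K₁ K₂ α : ℝ) (hK₁ : 0 < K₁) (hK₂ : 0 < K₂) (hα : 0 < α)
    (ha : ∀ ξ : E, ∀ s ∈ I, ∀ t ∈ I, s ≤ t →
      ‖(Φ t t₀ * P) ξ‖ ≤ K₁ * (h t / h s) ^ (-α) * ‖(Φ s t₀ * P) ξ‖)
    (hb : ∀ ξ : E, ∀ s ∈ I, ∀ t ∈ I, t ≤ s →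
      ‖(Φ t t₀ * (1 - P)) ξ‖ ≤ K₂ * (h s / h t) ^ (-α) * ‖(Φ s t₀ * (1 - P)) ξ‖) :
    ∃ M > (0:ℝ), ∀ t ∈ I, ‖Φ t t₀ * P * Φ t₀ t‖ ≤ M := by
  obtain ⟨T, hT, C, hC, hgrow⟩ := hbg
  have hT1 : 1 < h T := hgr.one_lt_of_estar_lt hT
  set δ := h T ^ (-α)
  have hδ1 : δ < 1 := Real.rpow_lt_one_of_one_lt_of_neg hT1 (neg_neg_of_pos hα)
  obtain ⟨N, hN⟩ := exists_mul_pow_mul_mul_pow_le (by positivity) hδ1 hK₁ hK₂ one_half_pos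
  refine ⟨2 * (1 + K₂ * δ ^ N * C ^ N), by positivity, fun t ht => ?_⟩
  refine ContinuousLinearMap.opNorm_le_bound _ (by positivity) fun ξ => ?_
  set η := Φ t₀ t ξ
  set s := hinv (h T ^ N * h t)
  have hts : t ≤ s := hgr.le_hinv_mul (one_le_pow₀ hT1.le) (hIJ ht)
  have hs : h s = h T ^ N * h t := hgr.apply_hinv_mul (by positivity) (hIJ ht)
  have hsI : s ∈ I := hIc.mem_of_le_of_forall_exists_gt hIunb ht hts
  have hratio : (h s / h t) ^ (-α) = δ ^ N := by
    rw [hs, mul_div_cancel_right₀ _ (hgr.pos t (hIJ ht)).ne',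
      ← Real.rpow_pow_comm (one_pos.trans hT1).le]
  have hgrowth : ‖Φ s t₀ η‖ ≤ C ^ N * ‖Φ t t₀ η‖ :=
    hgr.le_pow_mul_of_le_star (f := fun u => ‖Φ u t₀ η‖) hIJ hIc hT hC
      (fun _ _ => norm_nonneg _) (hgrow t₀ ht₀ η) N ht hsI hts hs.le
  have key := norm_le_of_opposite_contractions
    (by simpa only [hratio] using ha η t ht s hsI hts)
    (by simpa only [hratio] using hb η s hsI t ht hts)
    (by simpa only [ContinuousLinearMap.mul_apply_add_mul_one_sub_apply] using hgrowth)
    hN (by positivity)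
  rwa [ContinuousLinearMap.mul_apply_add_mul_one_sub_apply,
    hΦ.apply_apply_swap ht₀ (hIJ ht)] at key

/-- if `Φ` has uniform bounded `h`-growth on `I` (unbounded above) and
there is a nontrivial projection `P` (`P ≠ 0`, `P ≠ I`) with constants `K₁, K₂, α > 0`
satisfying (a) and (b), then the projections `Φ(t,t₀) P Φ(t₀,t)` are uniformly bounded on `I`. -/
theorem statement8 {J I : Set ℝ} {h hinv : ℝ → ℝ} (hgr : GrowthRate J h hinv)
    (hIJ : I ⊆ J) (hIc : I.OrdConnected) (hIunb : ∀ b : ℝ, ∃ t ∈ I, b < t)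
    {E : Type*} [NormedAddCommGroup E] [NormedSpace ℝ E] [FiniteDimensional ℝ E]
    (Φ : ℝ → ℝ → (E →L[ℝ] E)) (hΦ : IsEvolutionFamily J Φ)
    (t₀ : ℝ) (ht₀ : t₀ ∈ J)
    (hbg : UnifBoundedHGrowth J I h hinv Φ)
    (P : E →L[ℝ] E) (hP : P * P = P) (hP0 : P ≠ 0) (hPI : P ≠ 1)
    (K₁ K₂ α : ℝ) (hK₁ : 0 < K₁) (hK₂ : 0 < K₂) (hα : 0 < α)
    (ha : ∀ ξ : E, ∀ s ∈ I, ∀ t ∈ I, s ≤ t →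
      ‖(Φ t t₀ * P) ξ‖ ≤ K₁ * (h t / h s) ^ (-α) * ‖(Φ s t₀ * P) ξ‖)
    (hb : ∀ ξ : E, ∀ s ∈ I, ∀ t ∈ I, t ≤ s →
      ‖(Φ t t₀ * (1 - P)) ξ‖ ≤ K₂ * (h s / h t) ^ (-α) * ‖(Φ s t₀ * (1 - P)) ξ‖) :
    ∃ M > (0:ℝ), ∀ t ∈ I, ‖Φ t t₀ * P * Φ t₀ t‖ ≤ M :=
  statement8_general hgr hIJ hIc hIunb Φ hΦ t₀ ht₀ hbg P K₁ K₂ α hK₁ hK₂ hα ha hb
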